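/- Every element of a closed convex cone in a finite-dimensional real vector space that is pointed (K ∩ −K = {0}) is a finite nonnegative linear combination of elements lying on extreme rays of K. -/

import Mathlib

/-!
For `x ∈ K`, let `L x` be the linear span of the smallest face of `K` containing `x`; we induct
on `dim L x`. If `L x ⊆ ℝ x`, then `x` spans an extreme ray. Otherwise some direction `u ∈ L x`
has neither `u` nor `-u` in `K`, so (as `K` is closed and pointed) the line `x + ℝ u` leaves `K`
on both sides. Its two exit points lie on smaller faces, since `u` is a two-sided direction at
`x` but not at them, and `x` is a positive combination of the two.
-/

/-- The ray generated by `y`: all nonnegative multiples of `y`. -/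
def RayOf {V : Type*} [AddCommGroup V] [Module ℝ V] (y : V) : Set V :=
  {x | ∃ t : ℝ, 0 ≤ t ∧ x = t • y}

/-- `y` generates an extreme ray of the cone `K`: `y ∈ K` and no element of the ray of
`y` is a sum of two elements of `K` outside that ray. -/
def GeneratesExtremeRay {V : Type*} [AddCommGroup V] [Module ℝ V]
    (K : Set V) (y : V) : Prop :=
  y ∈ K ∧ ∀ x ∈ RayOf y, ∀ a ∈ K, ∀ b ∈ K, x = a + b → a ∈ RayOf y ∧ b ∈ RayOf y

open Filter Topology

lemma exists_forall_gt_add_smul_notMem {V : Type*} [AddCommGroup V] [Module ℝ V]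
    [TopologicalSpace V] [ContinuousAdd V] [ContinuousSMul ℝ V] {s : Set V} (hs : IsClosed s)
    (hconv : Convex ℝ s) {x u : V} (hx : x ∈ s) {t : ℝ} (ht : 0 ≤ t) (hout : x + t • u ∉ s) :
    ∃ r : ℝ, 0 ≤ r ∧ x + r • u ∈ s ∧ ∀ t > r, x + t • u ∉ s := by
  set I : Set ℝ := {r | 0 ≤ r ∧ x + r • u ∈ s}
  have hclosed : IsClosed I := isClosed_Ici.inter (hs.preimage (by fun_prop))
  have hbdd : BddAbove I := by
    refine ⟨t, fun r ⟨hr, hrs⟩ => le_of_not_gt fun htr => hout ?_⟩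
    have hr0 : 0 < r := ht.trans_lt htr
    rw [show t • u = (t / r) • (r • u) by rw [smul_smul, div_mul_cancel₀ _ hr0.ne']]
    exact hconv.add_smul_mem hx hrs ⟨div_nonneg ht hr, (div_le_one hr0).2 htr.le⟩
  have hsup := hclosed.csSup_mem ⟨0, le_rfl, by simpa using hx⟩ hbdd
  exact ⟨sSup I, hsup.1, hsup.2, fun t' ht' ht's =>
    (le_csSup hbdd ⟨hsup.1.trans ht'.le, ht's⟩).not_gt ht'⟩

namespace PointedCone

variable {V : Type*} [AddCommGroup V] [Module ℝ V] {K : PointedCone ℝ V} {x z u d : V}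

/-- The cone of feasible directions of `K` at `x`: for `x ∈ K`, the `d` with `x + t • d ∈ K`
for some `t > 0`. -/
def feasibleCone (K : PointedCone ℝ V) (x : V) : PointedCone ℝ V := K ⊔ hull ℝ {-x}

/-- The linear span of the smallest face of `K` containing `x`. -/
noncomputable def faceSpan (K : PointedCone ℝ V) (x : V) : Submodule ℝ V :=
  (K.feasibleCone x).lineal

lemma exists_pos_add_smul_mem_of_mem_feasibleCone (hz : z ∈ K) (hd : d ∈ K.feasibleCone z) :
    ∃ t : ℝ, 0 < t ∧ z + t • d ∈ K := by
  obtain ⟨k, hk, m, hm, rfl⟩ := Submodule.mem_sup.1 hd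
  obtain ⟨⟨c, hc⟩, rfl⟩ := Submodule.mem_span_singleton.1 hm
  refine ⟨(1 + c)⁻¹, by positivity, ?_⟩
  convert K.smul_mem (by positivity : (0 : ℝ) ≤ (1 + c)⁻¹) (add_mem hz hk) using 1
  rw [Nonneg.mk_smul]
  match_scalars
  · field_simp; ring
  · ring

lemma mem_faceSpan_self (hx : x ∈ K) : x ∈ K.faceSpan x :=
  ⟨Submodule.mem_sup_left hx,
    Submodule.mem_sup_right (Submodule.mem_span_singleton_self _)⟩

lemma faceSpan_add_smul_lt {r : ℝ} (hu : u ∈ K.faceSpan x) (hr : 0 ≤ r) (hz : x + r • u ∈ K)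
    (hexit : ∀ t > r, x + t • u ∉ K) : K.faceSpan (x + r • u) < K.faceSpan x := by
  have hle : K.feasibleCone (x + r • u) ≤ K.feasibleCone x := by
    refine sup_le le_sup_left (Submodule.span_le.2 ?_)
    rintro _ rfl
    rw [neg_add, ← smul_neg]
    exact add_mem (Submodule.mem_sup_right (Submodule.mem_span_singleton_self _))
      (smul_mem _ hr hu.2)
  refine lt_of_le_of_ne (gc_ofSubmodule_lineal.monotone_u hle) fun heq => ?_
  obtain ⟨t, ht, htK⟩ := exists_pos_add_smul_mem_of_mem_feasibleCone hz (heq ▸ hu).1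
  refine hexit (r + t) (by linarith) ?_
  rwa [add_smul, ← add_assoc]

lemma generatesExtremeRay_of_faceSpan_le (hsal : (K : ConvexCone ℝ V).Salient) (hx : x ∈ K)
    (h : K.faceSpan x ≤ ℝ ∙ x) : GeneratesExtremeRay K x := by
  have hray : ∀ t : ℝ, 0 ≤ t → ∀ a ∈ K, ∀ b ∈ K, t • x = a + b → a ∈ RayOf x := by
    intro t ht a ha b hb hab
    have hna : -a ∈ K.feasibleCone x := by
      rw [show -a = b + t • -x by rw [smul_neg, hab]; abel]
      exact add_mem (Submodule.mem_sup_left hb)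
        (smul_mem _ ht (Submodule.mem_sup_right (Submodule.mem_span_singleton_self _)))
    obtain ⟨c, rfl⟩ := Submodule.mem_span_singleton.1 (h ⟨Submodule.mem_sup_left ha, hna⟩)
    rcases le_or_gt 0 c with hc | hc
    · exact ⟨c, hc, rfl⟩
    · have hnx : -x ∈ K := by
        simpa [smul_smul, inv_mul_cancel₀ hc.ne] using
          K.smul_mem (inv_nonneg.2 (neg_pos.2 hc).le) ha
      have hx0 : x = 0 := by
        by_contra hx0
        exact hsal x hx hx0 hnx
      exact ⟨0, le_rfl, by simp [hx0]⟩
  refine ⟨hx, ?_⟩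
  rintro _ ⟨t, ht, rfl⟩ a ha b hb hab
  exact ⟨hray t ht a ha b hb hab, hray t ht b hb a ha (hab.trans (add_comm a b))⟩

section Topology

variable [TopologicalSpace V] [IsTopologicalAddGroup V] [ContinuousSMul ℝ V]

lemma mem_of_forall_add_smul_mem (hclosed : IsClosed (K : Set V)) {v : V}
    (h : ∀ t : ℝ, 0 ≤ t → v + t • u ∈ K) : u ∈ K := by
  have hlim : Tendsto (fun t : ℝ => t⁻¹ • (v + t • u)) atTop (𝓝 u) := by
    have : Tendsto (fun t : ℝ => t⁻¹ • v + u) atTop (𝓝 ((0 : ℝ) • v + u)) :=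
      (tendsto_inv_atTop_zero.smul_const v).add_const u
    rw [zero_smul, zero_add] at this
    refine this.congr' ?_
    filter_upwards [eventually_gt_atTop 0] with t ht
    rw [smul_add, smul_smul, inv_mul_cancel₀ ht.ne', one_smul]
  refine hclosed.mem_of_tendsto hlim ?_
  filter_upwards [eventually_ge_atTop 0] with t ht
  exact K.smul_mem (inv_nonneg.2 ht) (h t ht)

lemma exists_sub_smul_notMem_and_neg_notMem (hclosed : IsClosed (K : Set V))
    (hsal : (K : ConvexCone ℝ V).Salient) (hx : x ∈ K) (hx0 : x ≠ 0) {w : V}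
    (hw : w ∉ ℝ ∙ x) : ∃ s : ℝ, w - s • x ∉ K ∧ -(w - s • x) ∉ K := by
  by_contra! hcover
  set A : Set ℝ := {s | w - s • x ∈ K}
  have hAc : Aᶜ = {s | -(w - s • x) ∈ K} := by
    ext s
    refine ⟨hcover s, fun hneg hpos => hw ?_⟩
    have : w - s • x = 0 := by
      by_contra hne
      exact hsal _ hpos hne hneg
    exact Submodule.mem_span_singleton.2 ⟨s, (sub_eq_zero.1 this).symm⟩
  have hcont : Continuous fun s : ℝ => w - s • x := by fun_prop
  have hclopen : IsClopen A :=
    ⟨hclosed.preimage hcont, isClosed_compl_iff.1 (hAc ▸ hclosed.preimage hcont.neg)⟩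
  have hnx : -x ∈ K := by
    rcases isClopen_iff.1 hclopen with hA | hA
    · refine mem_of_forall_add_smul_mem hclosed (v := -w) fun t _ => ?_
      have : -t ∈ Aᶜ := by simp [hA]
      rw [hAc] at this
      simpa [neg_sub, sub_eq_add_neg, add_comm] using this
    · refine mem_of_forall_add_smul_mem hclosed (v := w) fun t _ => ?_
      have : t ∈ A := by simp [hA]
      simpa [A, sub_eq_add_neg] using this
  exact hsal x hx hx0 hnx

lemma exists_faceSpan_lt (hclosed : IsClosed (K : Set V)) (hx : x ∈ K) (hu : u ∈ K.faceSpan x)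
    (huK : u ∉ K) : ∃ r : ℝ, 0 < r ∧ x + r • u ∈ K ∧ K.faceSpan (x + r • u) < K.faceSpan x := by
  obtain ⟨t, ht, hout⟩ : ∃ t : ℝ, 0 ≤ t ∧ x + t • u ∉ K := by
    by_contra! h
    exact huK (mem_of_forall_add_smul_mem hclosed h)
  obtain ⟨r, hr, hrK, hexit⟩ := exists_forall_gt_add_smul_notMem hclosed K.convex hx ht hout
  have hlt := faceSpan_add_smul_lt hu hr hrK hexit
  rcases hr.eq_or_lt with rfl | hr
  · simp at hlt
  exact ⟨r, hr, hrK, hlt⟩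

theorem mem_hull_setOf_generatesExtremeRay [FiniteDimensional ℝ V]
    (hclosed : IsClosed (K : Set V)) (hsal : (K : ConvexCone ℝ V).Salient) (hx : x ∈ K) :
    x ∈ hull ℝ {y | GeneratesExtremeRay K y} := by
  induction hn : Module.finrank ℝ (K.faceSpan x) using Nat.strong_induction_on generalizing x
    with | _ n ih =>
  have ih' : ∀ z ∈ K, K.faceSpan z < K.faceSpan x → z ∈ hull ℝ {y | GeneratesExtremeRay K y} :=
    fun z hz hlt => ih _ (hn ▸ Submodule.finrank_lt_finrank_of_lt hlt) hz rfl
  rcases eq_or_ne x 0 with rfl | hx0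
  · exact zero_mem _
  by_cases hext : K.faceSpan x ≤ ℝ ∙ x
  · exact subset_hull (generatesExtremeRay_of_faceSpan_le hsal hx hext)
  obtain ⟨w, hw, hwx⟩ := SetLike.not_le_iff_exists.1 hext
  obtain ⟨s, hs, hs'⟩ := exists_sub_smul_notMem_and_neg_notMem hclosed hsal hx hx0 hwx
  have hu : w - s • x ∈ K.faceSpan x :=
    sub_mem hw (Submodule.smul_mem _ _ (mem_faceSpan_self hx))
  obtain ⟨r, hr, hzK, hlt⟩ := exists_faceSpan_lt hclosed hx hu hs
  obtain ⟨r', hr', hz'K, hlt'⟩ := exists_faceSpan_lt hclosed hx (neg_mem hu) hs'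
  refine (smul_mem_iff _ (add_pos hr hr')).1 ?_
  rw [show (r + r') • x = r' • (x + r • (w - s • x)) + r • (x + r' • -(w - s • x)) by module]
  exact add_mem (smul_mem _ hr'.le (ih' _ hzK hlt)) (smul_mem _ hr.le (ih' _ hz'K hlt'))

end Topology

lemma exists_fin_sum_smul_of_mem_hull {s : Set V} (hx : x ∈ hull ℝ s) :
    ∃ (k : ℕ) (c : Fin k → ℝ) (y : Fin k → V),
      (∀ i, 0 ≤ c i) ∧ (∀ i, y i ∈ s) ∧ x = ∑ i, c i • y i := by
  obtain ⟨k, c, y, rfl⟩ := Submodule.mem_span_set'.1 hx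
  exact ⟨k, fun i => c i, fun i => y i, fun i => (c i).2, fun i => (y i).2, rfl⟩

end PointedCone

/-- In a finite-dimensional real normed space, every element of a closed,
pointed convex cone is a finite nonnegative combination of elements lying on extreme
rays of the cone. -/
theorem mem_cone_eq_combination_of_extreme_rays
    {V : Type*} [NormedAddCommGroup V] [NormedSpace ℝ V] [FiniteDimensional ℝ V]
    (K : Set V) (hclosed : IsClosed K)
    (hadd : ∀ x ∈ K, ∀ y ∈ K, x + y ∈ K)
    (hsmul : ∀ c : ℝ, 0 ≤ c → ∀ x ∈ K, c • x ∈ K)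
    (hpointed : ∀ x, x ∈ K → -x ∈ K → x = 0)
    (x : V) (hx : x ∈ K) :
    ∃ (k : ℕ) (c : Fin k → ℝ) (y : Fin k → V),
      (∀ i, 0 ≤ c i) ∧ (∀ i, GeneratesExtremeRay K (y i)) ∧
      x = ∑ i, c i • y i := by
  let C : PointedCone ℝ V :=
    { carrier := K
      add_mem' := fun ha hb => hadd _ ha _ hb
      zero_mem' := by simpa using hsmul 0 le_rfl x hx
      smul_mem' := fun c y hy => hsmul c c.2 y hy }
  exact PointedCone.exists_fin_sum_smul_of_mem_hull
    (PointedCone.mem_hull_setOf_generatesExtremeRay (K := C) hclosed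
      (fun y hy hy0 hny => hy0 (hpointed y hy hny)) hx)
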